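/- arXiv:2102.08859 — 8 statements merged into one kernel-verified Lean document; each statement's English description precedes it below -/
import Mathlib

section
/- Let A and B be associative unital rings, f : A → B a ring homomorphism, let V and W_B be left B-modules and W_A a left A-module. Assume W_B is a direct summand of V as a B-module. Set E := End_B(V), and regard Hom_B(W_B, V) and Hom_A(W_A, V_f) as left E-modules, where e ∈ E acts by post-composition (with e, resp. with e viewed as an A-linear endomorphism of V_f). Then the natural map from Hom_A(W_A, (W_B)_f) to Hom_E(Hom_B(W_B, V), Hom_A(W_A, V_f)), sending g to the map h ↦ h_f ∘ g (where h_f : (W_B)_f → V_f is h viewed as A-linear), is an isomorphism of abelian groups. -/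
namespace LinearMap

variable {A B : Type*} [Ring A] [Ring B] {f : A →+* B}
  {V W X : Type*} [AddCommGroup V] [Module B V] [AddCommGroup W] [Module B W]
  [AddCommGroup X] [Module A X]

/-- Write `h = (h ∘ π) ∘ ι` and pull the endomorphism `h ∘ π` out through `F`. -/
theorem map_eq_comp_of_map_comp_left {ι : W →ₗ[B] V} {π : V →ₗ[B] W} (hπι : π ∘ₗ ι = id)
    {F : (W →ₗ[B] V) → (X →ₛₗ[f] V)} (hF : ∀ (e : Module.End B V) h, F (e ∘ₗ h) = e.comp (F h))
    (h : W →ₗ[B] V) : F h = h.comp (π.comp (F ι)) := by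
  rw [← comp_assoc, ← hF, comp_assoc, hπι, comp_id]

end LinearMap

/-- Let `A`, `B` be rings, `f : A → B` a ring homomorphism, `V`, `W_B`
left `B`-modules and `W_A` a left `A`-module, with `W_B` a direct summand of `V`
(witnessed by `ι`, `π` with `π ∘ ι = id`).  Writing `Hom_A(W_A, M_f)` for the group of
`f`-semilinear maps `W_A →ₛₗ[f] M` (i.e. `A`-linear maps into `M` with scalars restricted
along `f`), the natural map
`Hom_A(W_A, (W_B)_f) → Hom_E(Hom_B(W_B, V), Hom_A(W_A, V_f))`, `g ↦ (h ↦ h_f ∘ g)`,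
where `E = End_B(V)` acts by post-composition, is an isomorphism of abelian groups:
each `g` is sent to an additive `E`-equivariant map, the assignment is additive,
injective, and hits every additive `E`-equivariant map. -/
theorem stmt0 {A B : Type*} [Ring A] [Ring B] (f : A →+* B)
    (V W_B W_A : Type*) [AddCommGroup V] [Module B V]
    [AddCommGroup W_B] [Module B W_B]
    [AddCommGroup W_A] [Module A W_A]
    (ι : W_B →ₗ[B] V) (π : V →ₗ[B] W_B) (hπι : LinearMap.comp π ι = LinearMap.id) :
    (∀ (g : W_A →ₛₗ[f] W_B) (h₁ h₂ : W_B →ₗ[B] V),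
        LinearMap.comp (h₁ + h₂) g = LinearMap.comp h₁ g + LinearMap.comp h₂ g) ∧
    (∀ (g : W_A →ₛₗ[f] W_B) (e : Module.End B V) (h : W_B →ₗ[B] V),
        LinearMap.comp (LinearMap.comp e h) g = LinearMap.comp e (LinearMap.comp h g)) ∧
    (∀ (g₁ g₂ : W_A →ₛₗ[f] W_B) (h : W_B →ₗ[B] V),
        LinearMap.comp h (g₁ + g₂) = LinearMap.comp h g₁ + LinearMap.comp h g₂) ∧
    Function.Injective
      (fun (g : W_A →ₛₗ[f] W_B) => fun (h : W_B →ₗ[B] V) => LinearMap.comp h g) ∧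
    (∀ F : (W_B →ₗ[B] V) → (W_A →ₛₗ[f] V),
        (∀ h₁ h₂ : W_B →ₗ[B] V, F (h₁ + h₂) = F h₁ + F h₂) →
        (∀ (e : Module.End B V) (h : W_B →ₗ[B] V),
            F (LinearMap.comp e h) = LinearMap.comp e (F h)) →
        ∃ g : W_A →ₛₗ[f] W_B, ∀ h : W_B →ₗ[B] V, F h = LinearMap.comp h g) := by
  refine ⟨fun g h₁ h₂ => LinearMap.add_comp g h₂ h₁, fun g e h => LinearMap.comp_assoc g h e,
    fun g₁ g₂ h => LinearMap.comp_add g₁ g₂ h, fun g₁ g₂ hg => ?_,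
    fun F _ hF => ⟨π.comp (F ι), LinearMap.map_eq_comp_of_map_comp_left hπι hF⟩⟩
  exact (LinearMap.cancel_left (ι.injective_of_comp_eq_id π hπι)).mp congr($hg ι)
end

section
/- With the notation of the context, assume n = 2m is even and r is odd. Then Y_{Q,n} has finite index in Y, and [Y : Y_{Q,n}] = 2·m^r·n_{(r)}. -/
/-- The symmetric bilinear form on `Y = ℤ^{r+1}` (realized as `(Fin r → ℤ) × ℤ` with basis
`e_1, …, e_r` the standard vectors of the first factor and `e_0 = (0,1)`) attached to the
`n`-fold cover of `GSp_{2r}` of similitudes-splitting type: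
`B(e_i, e_i) = -2`, `B(e_i, e_j) = 0` for `i ≠ j`, `B(e_i, e_0) = 1`, `B(e_0, e_0) = 0`. -/
def GSpB (r : ℕ) (x y : (Fin r → ℤ) × ℤ) : ℤ :=
  -2 * (∑ i, x.1 i * y.1 i) + (∑ i, x.1 i) * y.2 + x.2 * (∑ i, y.1 i)

lemma GSpB_add_left (r : ℕ) (a b y : (Fin r → ℤ) × ℤ) :
    GSpB r (a + b) y = GSpB r a y + GSpB r b y := by
  simp only [GSpB, Prod.fst_add, Prod.snd_add, Pi.add_apply, add_mul,
    Finset.sum_add_distrib]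
  ring

lemma GSpB_neg_left (r : ℕ) (a y : (Fin r → ℤ) × ℤ) :
    GSpB r (-a) y = -GSpB r a y := by
  simp only [GSpB, Prod.fst_neg, Prod.snd_neg, Pi.neg_apply, neg_mul,
    Finset.sum_neg_distrib]
  ring

/-- The lattice `Y_{Q,n} = {y ∈ Y : B(y, y') ∈ nℤ for all y' ∈ Y}`. -/
def YQn (r n : ℕ) : AddSubgroup ((Fin r → ℤ) × ℤ) where
  carrier := {y | ∀ y', (n : ℤ) ∣ GSpB r y y'}
  zero_mem' := by
    intro y'
    simp [GSpB]
  add_mem' := by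
    intro a b ha hb y'
    rw [GSpB_add_left]
    exact dvd_add (ha y') (hb y')
  neg_mem' := by
    intro a ha y'
    rw [GSpB_neg_left]
    exact dvd_neg.mpr (ha y')

/-- The lattice `Y_0 = ℤe_1 ⊕ ⋯ ⊕ ℤe_r` (the cocharacter lattice of `Sp_{2r}`). -/
def Y0 (r : ℕ) : AddSubgroup ((Fin r → ℤ) × ℤ) where
  carrier := {y | y.2 = 0}
  zero_mem' := rfl
  add_mem' := by
    intro a b ha hb
    have ha' : a.2 = 0 := ha
    have hb' : b.2 = 0 := hb
    show (a + b).2 = 0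
    simp [Prod.snd_add, ha', hb']
  neg_mem' := by
    intro a ha
    have ha' : a.2 = 0 := ha
    show (-a).2 = 0
    simp [Prod.snd_neg, ha']

/-- The lattice `Y_{0,Q,n} = {y ∈ Y_0 : B(y, y') ∈ nℤ for all y' ∈ Y_0}`. -/
def Y0Qn (r n : ℕ) : AddSubgroup ((Fin r → ℤ) × ℤ) where
  carrier := {y | y.2 = 0 ∧ ∀ y' : (Fin r → ℤ) × ℤ, y'.2 = 0 → (n : ℤ) ∣ GSpB r y y'}
  zero_mem' := ⟨rfl, fun y' _ => by simp [GSpB]⟩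
  add_mem' := by
    rintro a b ⟨ha2, ha⟩ ⟨hb2, hb⟩
    refine ⟨?_, fun y' hy' => ?_⟩
    · simp only [Prod.snd_add, ha2, hb2, add_zero]
    · rw [GSpB_add_left]
      exact dvd_add (ha y' hy') (hb y' hy')
  neg_mem' := by
    rintro a ⟨ha2, ha⟩
    refine ⟨?_, fun y' hy' => ?_⟩
    · simp only [Prod.snd_neg, ha2, neg_zero]
    · rw [GSpB_neg_left]
      exact dvd_neg.mpr (ha y' hy')

/-!
Pairing `y` with `e_i` and `e_0` shows that `y ∈ Y_{Q,2m}` iff `2m ∣ y_0 - 2y_i` for all `i` and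
`2m ∣ ∑ y_i`. For `r ≥ 1` the first conditions force `y = (t + m a_1, …, t + m a_r, 2t)`, and
such vectors form a lattice of index `m^r · 2`. On it the last condition reads
`r t + m ∑ a_i ≡ 0 (mod 2m)`; as `r` is odd the values of `r t + m ∑ a_i` modulo `2m` are the
multiples of `gcd(2m, r)`, so this cuts out a sublattice of index `2m / gcd(2m, r)`.
-/

open Finset

lemma GSpB_eq_sum (r : ℕ) (x y : (Fin r → ℤ) × ℤ) :
    GSpB r x y = ∑ i, y.1 i * (x.2 - 2 * x.1 i) + y.2 * ∑ i, x.1 i := by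
  simp only [GSpB, mul_sum, sum_mul, ← sum_add_distrib]
  exact sum_congr rfl fun i _ => by ring

lemma mem_YQn_iff (r n : ℕ) (y : (Fin r → ℤ) × ℤ) :
    y ∈ YQn r n ↔ (∀ i, (n : ℤ) ∣ y.2 - 2 * y.1 i) ∧ (n : ℤ) ∣ ∑ i, y.1 i := by
  refine ⟨fun h => ⟨fun i => ?_, ?_⟩, fun ⟨hcoord, hsum⟩ y' => ?_⟩
  · simpa [GSpB_eq_sum, Pi.single_apply] using h (Pi.single i 1, 0)
  · simpa [GSpB_eq_sum] using h (0, 1)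
  · rw [GSpB_eq_sum]
    exact dvd_add (dvd_sum fun i _ => (hcoord i).mul_left _) (hsum.mul_left _)

lemma AddSubgroup.index_eq_index_comap_mul_index_range {G H : Type*} [AddGroup G] [AddGroup H]
    (f : G →+ H) {K : AddSubgroup H} (hK : K ≤ f.range) :
    K.index = (K.comap f).index * f.range.index := by
  rw [AddSubgroup.index_comap, AddSubgroup.relIndex_mul_index hK]

section Parametrization

variable (ι : Type*) (m : ℕ)

def shiftParam : ℤ × (ι → ℤ) →+ (ι → ℤ) × ℤ where
  toFun p := (fun i => p.1 + m * p.2 i, p.1)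
  map_zero' := by ext <;> simp
  map_add' p q := by
    ext <;> simp
    ring

def residueDiff : (ι → ℤ) × ℤ →+ (ι → ZMod m) where
  toFun y i := ((y.1 i - y.2 : ℤ) : ZMod m)
  map_zero' := by ext; simp
  map_add' y z := by
    funext i
    simp only [Prod.fst_add, Prod.snd_add, Pi.add_apply]
    push_cast
    ring

lemma range_shiftParam : (shiftParam ι m).range = (residueDiff ι m).ker := by
  ext ⟨x, t⟩
  simp only [AddMonoidHom.mem_range, AddMonoidHom.mem_ker, shiftParam, residueDiff,
    AddMonoidHom.coe_mk, ZeroHom.coe_mk, funext_iff, Pi.zero_apply,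
    ZMod.intCast_zmod_eq_zero_iff_dvd, Prod.ext_iff]
  constructor
  · rintro ⟨p, hx, rfl⟩ i
    exact ⟨p.2 i, by rw [← hx i]; ring⟩
  · intro h
    exact ⟨(t, fun i => (x i - t) / m), fun i => by
      rw [Int.mul_ediv_cancel' (h i)]; ring, rfl⟩

lemma residueDiff_surjective : Function.Surjective (residueDiff ι m) := fun v =>
  ⟨(fun i => (v i).cast, 0), by ext i; simp [residueDiff]⟩

lemma index_range_shiftParam [Fintype ι] :
    (shiftParam ι m).range.index = m ^ Fintype.card ι := by
  rw [range_shiftParam, AddSubgroup.index_ker,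
    AddMonoidHom.range_eq_top.mpr (residueDiff_surjective ι m), AddSubgroup.card_top,
    Nat.card_pi]
  simp [Nat.card_zmod]

variable (M : Type*) [AddGroup M]

def doubleSnd : M × ℤ →+ M × ℤ :=
  (AddMonoidHom.id M).prodMap (zmultiplesHom ℤ 2)

lemma doubleSnd_injective : Function.Injective (doubleSnd M) := by
  rw [doubleSnd, AddMonoidHom.coe_prodMap]
  exact Function.injective_id.prodMap fun a b h => by simpa using h

lemma index_range_doubleSnd : (doubleSnd M).range.index = 2 := by
  rw [doubleSnd, AddMonoidHom.range_prodMap,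
    AddMonoidHom.range_eq_top.mpr Function.surjective_id, AddSubgroup.range_zmultiplesHom,
    AddSubgroup.index_prod, AddSubgroup.index_top, Int.index_zmultiples]
  rfl

def evenParam : ℤ × (ι → ℤ) →+ (ι → ℤ) × ℤ :=
  (doubleSnd (ι → ℤ)).comp (shiftParam ι m)

@[simp]
lemma evenParam_apply (p : ℤ × (ι → ℤ)) :
    evenParam ι m p = (fun i => p.1 + m * p.2 i, 2 * p.1) := by
  simp [evenParam, doubleSnd, shiftParam, mul_comm]

lemma index_range_evenParam [Fintype ι] :
    (evenParam ι m).range.index = m ^ Fintype.card ι * 2 := by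
  rw [evenParam, AddMonoidHom.range_comp,
    AddSubgroup.index_map_of_injective _ (doubleSnd_injective _), index_range_shiftParam,
    index_range_doubleSnd]

end Parametrization

section Residue

variable (r m : ℕ)

def evenParamResidue : ℤ × (Fin r → ℤ) →+ ZMod (2 * m) where
  toFun p := ((r * p.1 + m * ∑ i, p.2 i : ℤ) : ZMod (2 * m))
  map_zero' := by simp
  map_add' p q := by
    simp only [Prod.fst_add, Prod.snd_add, Pi.add_apply, sum_add_distrib]
    push_cast
    ring

@[simp]
lemma evenParamResidue_apply (p : ℤ × (Fin r → ℤ)) :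
    evenParamResidue r m p = ((r * p.1 + m * ∑ i, p.2 i : ℤ) : ZMod (2 * m)) :=
  rfl

lemma comap_evenParam_YQn :
    (YQn r (2 * m)).comap (evenParam (Fin r) m) = (evenParamResidue r m).ker := by
  ext p
  have hsum : ∑ i, (evenParam (Fin r) m p).1 i = r * p.1 + m * ∑ i, p.2 i := by
    simp [sum_add_distrib, mul_sum]
  have hcoord :
      ∀ i, (2 * m : ℤ) ∣ (evenParam (Fin r) m p).2 - 2 * (evenParam (Fin r) m p).1 i :=
    fun i => ⟨-p.2 i, by simp; ring⟩
  rw [AddSubgroup.mem_comap, mem_YQn_iff, hsum, AddMonoidHom.mem_ker, evenParamResidue_apply,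
    ZMod.intCast_zmod_eq_zero_iff_dvd]
  push_cast
  exact and_iff_right hcoord

lemma YQn_le_range_evenParam (hr : 0 < r) : YQn r (2 * m) ≤ (evenParam (Fin r) m).range := by
  intro y hy
  obtain ⟨hcoord, -⟩ := (mem_YQn_iff r (2 * m) y).1 hy
  push_cast at hcoord
  obtain ⟨t, ht⟩ : (2 : ℤ) ∣ y.2 := by
    have := (dvd_mul_right 2 (m : ℤ)).trans (hcoord ⟨0, hr⟩)
    rwa [dvd_sub_left (dvd_mul_right _ _)] at this
  have hm : ∀ i, (m : ℤ) ∣ y.1 i - t := fun i => by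
    have := hcoord i
    rw [ht, ← mul_sub, mul_dvd_mul_iff_left two_ne_zero] at this
    exact dvd_sub_comm.mp this
  exact ⟨(t, fun i => (y.1 i - t) / m),
    Prod.ext (funext fun i => by simp [Int.mul_ediv_cancel' (hm i)]) (by simp [ht])⟩

/-- For odd `r`, `gcd(2m, r) = gcd(m, r)` divides both `r` and `m`, and Bézout writes it as
`r · gcdB (2m) r` modulo `2m`. -/
lemma range_evenParamResidue (hr : Odd r) :
    (evenParamResidue r m).range =
      AddSubgroup.zmultiples ((Nat.gcd (2 * m) r : ℕ) : ZMod (2 * m)) := by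
  apply le_antisymm
  · rintro _ ⟨p, rfl⟩
    have hg : Nat.gcd (2 * m) r = Nat.gcd m r :=
      Nat.Coprime.gcd_mul_left_cancel m (Nat.coprime_two_left.mpr hr)
    obtain ⟨c, hc⟩ : ((Nat.gcd (2 * m) r : ℕ) : ℤ) ∣ r * p.1 + m * ∑ i, p.2 i :=
      dvd_add (Int.natCast_dvd_natCast.mpr (Nat.gcd_dvd_right _ _) |>.mul_right _)
        (Int.natCast_dvd_natCast.mpr (hg ▸ Nat.gcd_dvd_left m r) |>.mul_right _)
    refine AddSubgroup.mem_zmultiples_iff.mpr ⟨c, ?_⟩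
    rw [evenParamResidue_apply, hc, zsmul_eq_mul]
    push_cast
    ring
  · rw [AddSubgroup.zmultiples_le]
    refine ⟨(Nat.gcdB (2 * m) r, 0), ?_⟩
    have h2m : ((2 * m : ℕ) : ZMod (2 * m)) = 0 := ZMod.natCast_self _
    rw [evenParamResidue_apply, ← Int.cast_natCast ((2 * m).gcd r), Nat.gcd_eq_gcd_ab]
    push_cast at h2m ⊢
    simp [h2m]

lemma index_ker_evenParamResidue (hr : Odd r) (hm : m ≠ 0) :
    (evenParamResidue r m).ker.index = 2 * m / Nat.gcd (2 * m) r := by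
  rw [AddSubgroup.index_ker, range_evenParamResidue r m hr, Nat.card_zmultiples,
    ZMod.addOrderOf_coe _ (by omega), Nat.gcd_gcd_self_right_left]

end Residue

theorem stmt4_general (r m : ℕ) (hrodd : Odd r) (hm : 1 ≤ m) :
    (YQn r (2 * m)).index ≠ 0 ∧
    (YQn r (2 * m)).index = 2 * m ^ r * (2 * m / Nat.gcd (2 * m) r) := by
  have hindex : (YQn r (2 * m)).index = 2 * m / Nat.gcd (2 * m) r * (m ^ r * 2) := by
    rw [AddSubgroup.index_eq_index_comap_mul_index_range _
        (YQn_le_range_evenParam r m hrodd.pos), comap_evenParam_YQn,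
      index_ker_evenParamResidue r m hrodd (by omega), index_range_evenParam, Fintype.card_fin]
  have hquot : 0 < 2 * m / Nat.gcd (2 * m) r :=
    Nat.div_pos (Nat.gcd_le_left _ (by omega)) (Nat.gcd_pos_of_pos_left _ (by omega))
  refine ⟨?_, by rw [hindex]; ring⟩
  rw [hindex]
  exact mul_ne_zero hquot.ne' (mul_ne_zero (pow_pos hm r).ne' two_ne_zero)

/-- For `n = 2m` even and `r` odd, `Y_{Q,n}` has finite index in `Y`,
equal to `2·m^r·n_{(r)}` where `n_{(r)} = n / gcd(n, r)`. -/
theorem stmt4 (r m : ℕ) (hr : 1 ≤ r) (hrodd : Odd r) (hm : 1 ≤ m) :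
    (YQn r (2 * m)).index ≠ 0 ∧
    (YQn r (2 * m)).index = 2 * m ^ r * (2 * m / Nat.gcd (2 * m) r) :=
  stmt4_general r m hrodd hm
end

section
/- With the notation of the context, assume n = 2m is even. Then Y_{0,Q,n} = mY_0, the intersection Y_0 ∩ Y_{Q,n} equals { y ∈ Y_0 : m divides y_i for all 1 ≤ i ≤ r and n divides y_1 + ⋯ + y_r }, and the index [Y_{0,Q,n} : Y_0 ∩ Y_{Q,n}] equals 2. -/
/-!
On `Y_0` the form is `B(y, y') = -2 ∑ y_i y'_i`, so pairing with the `e_i` shows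
`Y_{0,Q,2m} = mY_0`, while pairing with `e_0` adds exactly the condition `2m ∣ ∑ y_i`.
Hence `Y_0 ∩ Y_{Q,2m}` is the kernel of the coordinate sum modulo `2m` on `mY_0`, whose image
is the subgroup of `ZMod (2m)` generated by `m`, of order `2`.
-/

open Finset

section Form

variable {r : ℕ}

lemma GSpB_of_snd_eq_zero {x y : (Fin r → ℤ) × ℤ} (hx : x.2 = 0) (hy : y.2 = 0) :
    GSpB r x y = -2 * ∑ i, x.1 i * y.1 i := by
  simp [GSpB, hx, hy]

lemma GSpB_eq_of_snd_eq_zero {x : (Fin r → ℤ) × ℤ} (hx : x.2 = 0) (y : (Fin r → ℤ) × ℤ) :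
    GSpB r x y = GSpB r x (y.1, 0) + (∑ i, x.1 i) * y.2 := by
  simp [GSpB, hx]

lemma GSpB_single_zero (x : (Fin r → ℤ) × ℤ) (i : Fin r) :
    GSpB r x (Pi.single i 1, 0) = -2 * x.1 i + x.2 := by
  simp [GSpB, Pi.single_apply]

lemma GSpB_zero_one (x : (Fin r → ℤ) × ℤ) : GSpB r x (0, 1) = ∑ i, x.1 i := by
  simp [GSpB]

end Form

section Lattices

variable {r n m : ℕ} {y : (Fin r → ℤ) × ℤ}

lemma mem_Y0Qn_two_mul_iff : y ∈ Y0Qn r (2 * m) ↔ y.2 = 0 ∧ ∀ i, (m : ℤ) ∣ y.1 i := by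
  refine and_congr_right fun hy => ⟨fun h i => ?_, fun h y' hy' => ?_⟩
  · have hi := h _ (rfl : (Pi.single i 1, (0 : ℤ)).2 = 0)
    rw [GSpB_single_zero, hy, add_zero] at hi
    simpa [mul_dvd_mul_iff_left] using hi
  · rw [GSpB_of_snd_eq_zero hy hy']
    simpa [mul_dvd_mul_iff_left] using dvd_sum fun i _ => (h i).mul_right (y'.1 i)

/-- Every `y'` is a vector of `Y_0` plus `y'_0 e_0`, and `B(y, e_0) = y_1 + ⋯ + y_r`
for `y ∈ Y_0`. -/
lemma mem_Y0_inf_YQn_iff :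
    y ∈ Y0 r ⊓ YQn r n ↔ y ∈ Y0Qn r n ∧ (n : ℤ) ∣ ∑ i, y.1 i := by
  refine ⟨fun ⟨hy, h⟩ => ⟨⟨hy, fun y' _ => h y'⟩, GSpB_zero_one y ▸ h _⟩,
    fun ⟨⟨hy, h⟩, hsum⟩ => ⟨hy, fun y' => ?_⟩⟩
  rw [GSpB_eq_of_snd_eq_zero hy]
  exact dvd_add (h _ rfl) (hsum.mul_right _)

def coordSumMod (r n : ℕ) : ((Fin r → ℤ) × ℤ) →+ ZMod n :=
  AddMonoidHom.mk' (fun y => ((∑ i, y.1 i : ℤ) : ZMod n)) fun a b => by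
    simp [sum_add_distrib]

lemma Y0_inf_YQn_eq : Y0 r ⊓ YQn r n = Y0Qn r n ⊓ (coordSumMod r n).ker := by
  ext y
  rw [mem_Y0_inf_YQn_iff, AddSubgroup.mem_inf, AddMonoidHom.mem_ker, coordSumMod,
    AddMonoidHom.mk'_apply, ZMod.intCast_zmod_eq_zero_iff_dvd]

lemma map_coordSumMod_Y0Qn_two_mul (hr : 1 ≤ r) :
    (Y0Qn r (2 * m)).map (coordSumMod r (2 * m)) =
      AddSubgroup.zmultiples (m : ZMod (2 * m)) := by
  apply le_antisymm
  · rintro _ ⟨y, hy, rfl⟩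
    obtain ⟨s, hs⟩ := dvd_sum fun i (_ : i ∈ univ) => (mem_Y0Qn_two_mul_iff.mp hy).2 i
    refine AddSubgroup.mem_zmultiples_iff.mpr ⟨s, ?_⟩
    rw [coordSumMod, AddMonoidHom.mk'_apply, hs, zsmul_eq_mul]
    push_cast
    ring
  · rw [AddSubgroup.zmultiples_le]
    refine ⟨(Pi.single ⟨0, hr⟩ (m : ℤ), 0),
      mem_Y0Qn_two_mul_iff.mpr ⟨rfl, fun i => ?_⟩, ?_⟩
    · rcases eq_or_ne i ⟨0, hr⟩ with rfl | hi
      · simp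
      · simp [hi]
    · rw [coordSumMod, AddMonoidHom.mk'_apply, sum_pi_single']
      simp

end Lattices

lemma card_zmultiples_natCast_zmod_mul {k m : ℕ} (hk : k ≠ 0) (hm : m ≠ 0) :
    Nat.card (AddSubgroup.zmultiples (m : ZMod (k * m))) = k := by
  rw [Nat.card_zmultiples, ZMod.addOrderOf_coe m (mul_ne_zero hk hm),
    Nat.gcd_eq_right (dvd_mul_left m k), Nat.mul_div_cancel k (Nat.pos_of_ne_zero hm)]

/-- For `n = 2m` even: `Y_{0,Q,n} = mY_0`,
`Y_0 ∩ Y_{Q,n} = {y ∈ Y_0 : m ∣ y_i for all i and n ∣ y_1 + ⋯ + y_r}`, and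
`[Y_{0,Q,n} : Y_0 ∩ Y_{Q,n}] = 2`. -/
theorem stmt6 (r m : ℕ) (hr : 1 ≤ r) (hm : 1 ≤ m) :
    ((Y0Qn r (2 * m) : AddSubgroup ((Fin r → ℤ) × ℤ)) : Set ((Fin r → ℤ) × ℤ))
        = {y | y.2 = 0 ∧ ∀ i, (m : ℤ) ∣ y.1 i} ∧
    ((Y0 r ⊓ YQn r (2 * m) : AddSubgroup ((Fin r → ℤ) × ℤ)) : Set ((Fin r → ℤ) × ℤ))
        = {y | y.2 = 0 ∧ (∀ i, (m : ℤ) ∣ y.1 i) ∧ ((2 * m : ℕ) : ℤ) ∣ ∑ i, y.1 i} ∧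
    (Y0 r ⊓ YQn r (2 * m)).relIndex (Y0Qn r (2 * m)) = 2 := by
  refine ⟨Set.ext fun y => mem_Y0Qn_two_mul_iff, Set.ext fun y => ?_, ?_⟩
  · rw [SetLike.mem_coe, mem_Y0_inf_YQn_iff, mem_Y0Qn_two_mul_iff, and_assoc]
    rfl
  · rw [Y0_inf_YQn_eq, AddSubgroup.inf_relIndex_left, AddSubgroup.relIndex_ker,
      map_coordSumMod_Y0Qn_two_mul hr]
    exact card_zmultiples_natCast_zmod_mul two_ne_zero (Nat.one_le_iff_ne_zero.mp hm)
end

section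
/- With the notation of the context, assume n is odd. Then Y_{0,Q,n} = Y_0 ∩ Y_{Q,n} = nY_0. (This is the lattice criterion showing that for odd n the n-fold cover of GSp_{2r} of similitudes-splitting type together with its restriction to Sp_{2r} form an isotypic pair.) -/
section

variable {r n : ℕ}

lemma GSpB_single_right {y : (Fin r → ℤ) × ℤ} (hy : y.2 = 0) (j : Fin r) :
    GSpB r y (Pi.single j 1, 0) = -2 * y.1 j := by
  simp [GSpB, hy, Pi.single_apply]

lemma dvd_GSpB_of_forall_dvd {y : (Fin r → ℤ) × ℤ} (hy : y.2 = 0) (h : ∀ i, (n : ℤ) ∣ y.1 i)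
    (y' : (Fin r → ℤ) × ℤ) : (n : ℤ) ∣ GSpB r y y' := by
  simp only [GSpB, hy, zero_mul, add_zero]
  exact dvd_add (dvd_mul_of_dvd_right (Finset.dvd_sum fun i _ => (h i).mul_right _) _)
    (dvd_mul_of_dvd_left (Finset.dvd_sum fun i _ => h i) _)

/-- Pairing with `e_j` gives `-2 y_j`, and `2` is invertible modulo an odd `n`. -/
lemma forall_dvd_of_dvd_GSpB_single (hn : Odd n) {y : (Fin r → ℤ) × ℤ} (hy : y.2 = 0)
    (h : ∀ j, (n : ℤ) ∣ GSpB r y (Pi.single j 1, 0)) (j : Fin r) : (n : ℤ) ∣ y.1 j := by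
  have hcop : IsCoprime (n : ℤ) (-2) :=
    (Nat.isCoprime_iff_coprime.mpr hn.coprime_two_right).neg_right
  exact hcop.dvd_of_dvd_mul_left (GSpB_single_right hy j ▸ h j)

end

theorem stmt8_general (r n : ℕ) (hodd : Odd n) :
    ((Y0Qn r n : AddSubgroup ((Fin r → ℤ) × ℤ)) : Set ((Fin r → ℤ) × ℤ))
        = {y | y.2 = 0 ∧ ∀ i, (n : ℤ) ∣ y.1 i} ∧
    ((Y0 r ⊓ YQn r n : AddSubgroup ((Fin r → ℤ) × ℤ)) : Set ((Fin r → ℤ) × ℤ))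
        = {y | y.2 = 0 ∧ ∀ i, (n : ℤ) ∣ y.1 i} := by
  constructor <;> ext y <;> constructor
  · rintro ⟨hy, h⟩
    exact ⟨hy, forall_dvd_of_dvd_GSpB_single hodd hy fun j => h _ rfl⟩
  · rintro ⟨hy, h⟩
    exact ⟨hy, fun y' _ => dvd_GSpB_of_forall_dvd hy h y'⟩
  · rintro ⟨hy, h⟩
    exact ⟨hy, forall_dvd_of_dvd_GSpB_single hodd hy fun j => h _⟩
  · rintro ⟨hy, h⟩
    exact ⟨hy, dvd_GSpB_of_forall_dvd hy h⟩

/-- For `n` odd, `Y_{0,Q,n} = Y_0 ∩ Y_{Q,n} = nY_0`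
(the lattice criterion that `(GSp_{2r}, Sp_{2r})` covers form an isotypic pair). -/
theorem stmt8 (r n : ℕ) (hr : 1 ≤ r) (hodd : Odd n) :
    ((Y0Qn r n : AddSubgroup ((Fin r → ℤ) × ℤ)) : Set ((Fin r → ℤ) × ℤ))
        = {y | y.2 = 0 ∧ ∀ i, (n : ℤ) ∣ y.1 i} ∧
    ((Y0 r ⊓ YQn r n : AddSubgroup ((Fin r → ℤ) × ℤ)) : Set ((Fin r → ℤ) × ℤ))
        = {y | y.2 = 0 ∧ ∀ i, (n : ℤ) ∣ y.1 i} :=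
  stmt8_general r n hodd
end

section
/- With the notation of the context, set Y_c := ℤe_c. Then Y_c ∩ Y_{Q,n} = ℤ·(n_{(r)}e_c), and the lattice Y_{c,Q,n} := { y ∈ Y_c : B(y, y') ∈ nℤ for all y' ∈ Y_c } equals ℤ·(n_{(2r)}e_c). These two subgroups of Y_c coincide if and only if the 2-adic valuation of n is at most the 2-adic valuation of r. -/
/-- The central cocharacter `e_c = 2e_0 + e_1 + ⋯ + e_r`. -/
def ecv (r : ℕ) : (Fin r → ℤ) × ℤ := (fun _ => 1, 2)

/-- The lattice `Y_{c,Q,n} = {y ∈ Y_c : B(y, y') ∈ nℤ for all y' ∈ Y_c}`, where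
`Y_c = ℤe_c`. -/
def YcQn (r n : ℕ) : AddSubgroup ((Fin r → ℤ) × ℤ) where
  carrier := {y | y ∈ AddSubgroup.zmultiples (ecv r) ∧
      ∀ y' ∈ AddSubgroup.zmultiples (ecv r), (n : ℤ) ∣ GSpB r y y'}
  zero_mem' := ⟨zero_mem _, fun y' _ => by simp [GSpB]⟩
  add_mem' := by
    rintro a b ⟨haz, ha⟩ ⟨hbz, hb⟩
    refine ⟨add_mem haz hbz, fun y' hy' => ?_⟩
    rw [GSpB_add_left]
    exact dvd_add (ha y' hy') (hb y' hy')
  neg_mem' := by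
    rintro a ⟨haz, ha⟩
    refine ⟨neg_mem haz, fun y' hy' => ?_⟩
    rw [GSpB_neg_left]
    exact dvd_neg.mpr (ha y' hy')

section Lattices

variable {G : Type*} [AddCommGroup G]

lemma AddSubgroup.eq_zmultiples_zsmul_of_zsmul_mem_iff {x : G} {H : AddSubgroup G}
    (hH : H ≤ AddSubgroup.zmultiples x) {d : ℤ} (h : ∀ k : ℤ, k • x ∈ H ↔ d ∣ k) :
    H = AddSubgroup.zmultiples (d • x) := by
  ext y
  constructor
  · intro hy
    obtain ⟨k, rfl⟩ := hH hy
    obtain ⟨j, rfl⟩ := (h k).mp hy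
    exact ⟨j, by simp only [mul_comm d, mul_smul]⟩
  · rintro ⟨j, rfl⟩
    simpa only [smul_smul] using (h (j * d)).mpr (dvd_mul_left d j)

lemma AddSubgroup.zmultiples_zsmul_eq_map (x : G) (c : ℤ) :
    AddSubgroup.zmultiples (c • x) = (AddSubgroup.zmultiples c).map (zmultiplesHom G x) := by
  rw [AddMonoidHom.map_zmultiples]
  rfl

end Lattices

lemma Int.zmultiples_natCast_inj {a b : ℕ} :
    AddSubgroup.zmultiples (a : ℤ) = AddSubgroup.zmultiples (b : ℤ) ↔ a = b := by
  refine ⟨fun h => Nat.dvd_antisymm ?_ ?_, fun h => h ▸ rfl⟩ <;>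
    exact Int.natCast_dvd_natCast.mp (Int.mem_zmultiples_iff.mp (h ▸ AddSubgroup.mem_zmultiples _))

lemma Int.natCast_dvd_mul_natCast_iff {n m : ℕ} (hm : m ≠ 0) (k : ℤ) :
    (n : ℤ) ∣ k * m ↔ ((n / n.gcd m : ℕ) : ℤ) ∣ k := by
  set g := n.gcd m
  have hg : (g : ℤ) ≠ 0 := by exact_mod_cast Nat.gcd_ne_zero_right hm
  have hn : (n : ℤ) = g * ((n / g : ℕ) : ℤ) := by
    rw [← Nat.cast_mul, Nat.mul_div_cancel' (Nat.gcd_dvd_left n m)]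
  have hm' : (m : ℤ) = g * ((m / g : ℕ) : ℤ) := by
    rw [← Nat.cast_mul, Nat.mul_div_cancel' (Nat.gcd_dvd_right n m)]
  have hcop : IsCoprime ((n / g : ℕ) : ℤ) ((m / g : ℕ) : ℤ) :=
    (Nat.coprime_div_gcd_div_gcd (Nat.pos_of_ne_zero (Nat.gcd_ne_zero_right hm))).isCoprime
  rw [hn, hm', mul_left_comm, mul_dvd_mul_iff_left hg]
  exact ⟨hcop.dvd_of_dvd_mul_right, fun h => h.mul_right _⟩

lemma Nat.gcd_eq_gcd_two_mul_iff {n r : ℕ} (hn : n ≠ 0) (hr : r ≠ 0) :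
    n.gcd r = n.gcd (2 * r) ↔ padicValNat 2 n ≤ padicValNat 2 r := by
  rw [← Nat.factorization_inj.eq_iff (Nat.gcd_ne_zero_left hn) (Nat.gcd_ne_zero_left hn),
    Nat.factorization_gcd hn hr, Nat.factorization_gcd hn (by positivity),
    Nat.factorization_mul two_ne_zero hr, Nat.prime_two.factorization, Finsupp.ext_iff,
    ← Nat.factorization_def n Nat.prime_two, ← Nat.factorization_def r Nat.prime_two]
  constructor
  · intro h
    have h2 := h 2
    simp only [Finsupp.inf_apply, Finsupp.add_apply, Finsupp.single_eq_same] at h2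
    omega
  · intro h p
    simp only [Finsupp.inf_apply, Finsupp.add_apply, Finsupp.single_apply]
    split_ifs with hp
    · subst hp
      omega
    · omega

lemma Nat.div_gcd_eq_div_gcd_two_mul_iff (n : ℕ) {r : ℕ} (hr : r ≠ 0) :
    n / n.gcd r = n / n.gcd (2 * r) ↔ padicValNat 2 n ≤ padicValNat 2 r := by
  rcases eq_or_ne n 0 with rfl | hn
  · simp
  rw [Nat.div_eq_iff_eq_of_dvd_dvd hn (Nat.gcd_dvd_left n r) (Nat.gcd_dvd_left n (2 * r)),
    Nat.gcd_eq_gcd_two_mul_iff hn hr]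

lemma GSpB_zsmul_ecv_left (r : ℕ) (k : ℤ) (y : (Fin r → ℤ) × ℤ) :
    GSpB r (k • ecv r) y = k * r * y.2 := by
  simp only [GSpB, ecv, Prod.smul_fst, Prod.smul_snd, Pi.smul_apply, smul_eq_mul, mul_one,
    ← Finset.mul_sum, Finset.sum_const, Finset.card_univ, Fintype.card_fin, nsmul_eq_mul]
  ring

lemma zsmul_ecv_injective (r : ℕ) : Function.Injective (zmultiplesHom _ (ecv r)) := by
  intro k k' h
  have h2 := congrArg Prod.snd h
  simp only [zmultiplesHom_apply, ecv, Prod.smul_snd, smul_eq_mul] at h2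
  omega

lemma zsmul_ecv_mem_YQn_iff (r n : ℕ) (k : ℤ) : k • ecv r ∈ YQn r n ↔ (n : ℤ) ∣ k * r := by
  show (∀ y, (n : ℤ) ∣ GSpB r (k • ecv r) y) ↔ _
  simp only [GSpB_zsmul_ecv_left]
  exact ⟨fun h => by simpa using h (0, 1), fun h y => h.mul_right y.2⟩

lemma zsmul_ecv_mem_YcQn_iff (r n : ℕ) (k : ℤ) :
    k • ecv r ∈ YcQn r n ↔ (n : ℤ) ∣ k * ((2 * r : ℕ) : ℤ) := by
  have hB (m : ℤ) : GSpB r (k • ecv r) (m • ecv r) = k * ((2 * r : ℕ) : ℤ) * m := by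
    rw [GSpB_zsmul_ecv_left]
    simp only [ecv, Prod.smul_snd, smul_eq_mul]
    push_cast
    ring
  refine ⟨fun h => ?_, fun h => ?_⟩
  · simpa only [hB, mul_one] using h.2 _ (AddSubgroup.zsmul_mem_zmultiples (ecv r) 1)
  refine ⟨AddSubgroup.zsmul_mem_zmultiples _ _, ?_⟩
  rintro _ ⟨m, rfl⟩
  exact (hB m).symm ▸ h.mul_right m

theorem stmt9_general (r n : ℕ) (hr : 1 ≤ r) :
    AddSubgroup.zmultiples (ecv r) ⊓ YQn r n
        = AddSubgroup.zmultiples (((n / Nat.gcd n r : ℕ) : ℤ) • ecv r) ∧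
    YcQn r n = AddSubgroup.zmultiples (((n / Nat.gcd n (2 * r) : ℕ) : ℤ) • ecv r) ∧
    (AddSubgroup.zmultiples (ecv r) ⊓ YQn r n = YcQn r n
      ↔ padicValNat 2 n ≤ padicValNat 2 r) := by
  have hr0 : r ≠ 0 := by omega
  have hYQn : AddSubgroup.zmultiples (ecv r) ⊓ YQn r n
      = AddSubgroup.zmultiples (((n / Nat.gcd n r : ℕ) : ℤ) • ecv r) := by
    refine AddSubgroup.eq_zmultiples_zsmul_of_zsmul_mem_iff inf_le_left fun k => ?_
    rw [AddSubgroup.mem_inf, zsmul_ecv_mem_YQn_iff, Int.natCast_dvd_mul_natCast_iff hr0]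
    exact and_iff_right (AddSubgroup.zsmul_mem_zmultiples _ _)
  have hYcQn : YcQn r n = AddSubgroup.zmultiples (((n / Nat.gcd n (2 * r) : ℕ) : ℤ) • ecv r) :=
    AddSubgroup.eq_zmultiples_zsmul_of_zsmul_mem_iff (fun _ hy => (show _ ∧ _ from hy).1)
      fun k => by rw [zsmul_ecv_mem_YcQn_iff, Int.natCast_dvd_mul_natCast_iff (by omega)]
  refine ⟨hYQn, hYcQn, ?_⟩
  rw [hYQn, hYcQn, AddSubgroup.zmultiples_zsmul_eq_map, AddSubgroup.zmultiples_zsmul_eq_map,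
    (AddSubgroup.map_injective (zsmul_ecv_injective r)).eq_iff, Int.zmultiples_natCast_inj,
    Nat.div_gcd_eq_div_gcd_two_mul_iff n hr0]

/-- With `Y_c = ℤe_c`: `Y_c ∩ Y_{Q,n} = ℤ·(n_{(r)}e_c)` and
`Y_{c,Q,n} = ℤ·(n_{(2r)}e_c)`, and these two subgroups of `Y_c` coincide if and only if
the 2-adic valuation of `n` is at most the 2-adic valuation of `r`. -/
theorem stmt9 (r n : ℕ) (hr : 1 ≤ r) (hn : 1 ≤ n) :
    AddSubgroup.zmultiples (ecv r) ⊓ YQn r n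
        = AddSubgroup.zmultiples (((n / Nat.gcd n r : ℕ) : ℤ) • ecv r) ∧
    YcQn r n = AddSubgroup.zmultiples (((n / Nat.gcd n (2 * r) : ℕ) : ℤ) • ecv r) ∧
    (AddSubgroup.zmultiples (ecv r) ⊓ YQn r n = YcQn r n
      ↔ padicValNat 2 n ≤ padicValNat 2 r) :=
  stmt9_general r n hr
end

section
/- Let r ≥ 2 and let Q : ℤ^{r+1} → ℤ be a quadratic form with associated symmetric bilinear form B_Q(x, y) = Q(x + y) − Q(x) − Q(y), where ℤ^{r+1} has basis e_1, …, e_r, e_0. Assume Q is invariant under every permutation of e_1, …, e_r fixing e_0, and under the linear automorphism σ determined by e_r ↦ e_0 − e_r, e_i ↦ e_i for 1 ≤ i ≤ r − 1, and e_0 ↦ e_0. Then Q(e_1) = Q(e_2) = ⋯ = Q(e_r); B_Q(e_i, e_0) = Q(e_0) for every 1 ≤ i ≤ r; and Q(e_0) = 2·B_Q(e_i, e_j) for all 1 ≤ i ≠ j ≤ r. -/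
/-!
Both symmetries are linear, so they preserve the polar form `B` of `Q` as well as `Q` itself.
Transpositions of the `e_i` make `Q(e_i)`, `B(e_i, e_0)` and `B(e_i, e_j)` (`i ≠ j`) independent
of the indices. The reflection `σ` is `v ↦ v - ⟨v, α⟩ α^∨` with `α = e_r^*` and `α^∨ = 2e_r - e_0`,
so it sends `e_r ↦ e_0 - e_r` and fixes the other `e_i`. Then `Q(e_0 - e_r) = Q(e_r)` gives
`B(e_r, e_0) = Q(e_0)`, and `B(e_i, e_0 - e_r) = B(e_i, e_r)` gives `B(e_i, e_0) = 2 B(e_i, e_r)`.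
-/

open QuadraticMap

theorem QuadraticMap.polar_map_map_of_forall_map_eq {M N F : Type*} [AddCommGroup M]
    [AddCommGroup N] [FunLike F M M] [AddHomClass F M M] (f : M → N) {g : F}
    (hg : ∀ v, f (g v) = f v) (x y : M) : polar f (g x) (g y) = polar f x y := by
  simp only [polar, ← map_add, hg]

section

variable {ι R : Type*} [DecidableEq ι] [CommRing R]

def simpleReflection (k : ι) : Module.End R ((ι → R) × R) :=
  Module.preReflection (Pi.single k 2, -1) ((LinearMap.proj k).comp (LinearMap.fst R (ι → R) R))

theorem simpleReflection_apply (k : ι) (v : (ι → R) × R) :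
    simpleReflection k v = (Function.update v.1 k (-v.1 k), v.2 + v.1 k) := by
  ext i
  · by_cases hi : i = k <;> simp [simpleReflection, Module.preReflection_apply, mul_two, hi]
  · simp [simpleReflection, Module.preReflection_apply]

theorem simpleReflection_single_self (k : ι) :
    simpleReflection k ((Pi.single k 1, 0) : (ι → R) × R) = (0, 1) - (Pi.single k 1, 0) := by
  ext i
  · by_cases hi : i = k <;> simp [simpleReflection_apply, hi]
  · simp [simpleReflection_apply]

theorem simpleReflection_single_of_ne {i k : ι} (h : i ≠ k) :
    simpleReflection k ((Pi.single i 1, 0) : (ι → R) × R) = (Pi.single i 1, 0) := by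
  simp [simpleReflection_apply, h]

end

section

variable {ι R N : Type*} [CommRing R] [AddCommGroup N] [Module R N]
  (Q : QuadraticMap R ((ι → R) × R) N)

theorem polar_comp_perm_eq
    (hperm : ∀ (π : Equiv.Perm ι) (v : (ι → R) × R), Q (v.1 ∘ π, v.2) = Q v)
    (π : Equiv.Perm ι) (x y : (ι → R) × R) :
    polar Q (x.1 ∘ π, x.2) (y.1 ∘ π, y.2) = polar Q x y :=
  polar_map_map_of_forall_map_eq Q (g := (LinearMap.funLeft R R π).prodMap LinearMap.id)
    (hperm π) x y

variable [DecidableEq ι]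

theorem map_single_eq_of_perm
    (hperm : ∀ (π : Equiv.Perm ι) (v : (ι → R) × R), Q (v.1 ∘ π, v.2) = Q v) (i j : ι) :
    Q (Pi.single i 1, 0) = Q (Pi.single j 1, 0) := by
  simpa [Pi.single_comp_equiv] using hperm (Equiv.swap i j) (Pi.single j 1, 0)

theorem polar_single_zero_one_eq_of_perm
    (hperm : ∀ (π : Equiv.Perm ι) (v : (ι → R) × R), Q (v.1 ∘ π, v.2) = Q v) (i j : ι) :
    polar Q (Pi.single i 1, 0) (0, 1) = polar Q (Pi.single j 1, 0) (0, 1) := by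
  simpa [Pi.single_comp_equiv] using
    polar_comp_perm_eq Q hperm (Equiv.swap i j) (Pi.single j 1, 0) (0, 1)

theorem polar_single_single_eq_of_perm
    (hperm : ∀ (π : Equiv.Perm ι) (v : (ι → R) × R), Q (v.1 ∘ π, v.2) = Q v) (i j k : ι) :
    polar Q (Pi.single i 1, 0) (Pi.single j 1, 0) =
      polar Q (Pi.single (Equiv.swap j k i) 1, 0) (Pi.single k 1, 0) := by
  simpa [Pi.single_comp_equiv] using
    (polar_comp_perm_eq Q hperm (Equiv.swap j k) (Pi.single i 1, 0) (Pi.single j 1, 0)).symm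

variable {k : ι}

theorem map_simpleReflection
    (hσ : ∀ v : (ι → R) × R, Q (Function.update v.1 k (-v.1 k), v.2 + v.1 k) = Q v)
    (v : (ι → R) × R) : Q (simpleReflection k v) = Q v := by
  rw [simpleReflection_apply]
  exact hσ v

theorem polar_single_self_zero_one_of_simpleReflection
    (hσ : ∀ v, Q (simpleReflection k v) = Q v) :
    polar Q (Pi.single k 1, 0) (0, 1) = Q (0, 1) := by
  have h := hσ (Pi.single k 1, 0)
  rw [simpleReflection_single_self] at h
  calc polar Q (Pi.single k 1, 0) (0, 1) = -polar Q (0, 1) (-(Pi.single k 1, 0)) := by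
        rw [polar_neg_right, neg_neg, polar_comm]
    _ = Q (0, 1) := by
        rw [polar, ← sub_eq_add_neg, h, QuadraticMap.map_neg]
        abel

theorem polar_single_zero_one_eq_two_smul_of_simpleReflection
    (hσ : ∀ v, Q (simpleReflection k v) = Q v) {i : ι} (hi : i ≠ k) :
    polar Q (Pi.single i 1, 0) (0, 1) = 2 • polar Q (Pi.single i 1, 0) (Pi.single k 1, 0) := by
  have h := polar_map_map_of_forall_map_eq Q hσ (Pi.single i 1, 0) (Pi.single k 1, 0)
  rw [simpleReflection_single_of_ne hi, simpleReflection_single_self, polar_sub_right] at h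
  rw [two_smul]
  exact sub_eq_iff_eq_add.mp h

theorem polar_single_zero_one_eq_map
    (hperm : ∀ (π : Equiv.Perm ι) (v : (ι → R) × R), Q (v.1 ∘ π, v.2) = Q v)
    (hσ : ∀ v : (ι → R) × R, Q (Function.update v.1 k (-v.1 k), v.2 + v.1 k) = Q v) (i : ι) :
    polar Q (Pi.single i 1, 0) (0, 1) = Q (0, 1) :=
  (polar_single_zero_one_eq_of_perm Q hperm i k).trans
    (polar_single_self_zero_one_of_simpleReflection Q (map_simpleReflection Q hσ))

theorem map_zero_one_eq_two_smul_polar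
    (hperm : ∀ (π : Equiv.Perm ι) (v : (ι → R) × R), Q (v.1 ∘ π, v.2) = Q v)
    (hσ : ∀ v : (ι → R) × R, Q (Function.update v.1 k (-v.1 k), v.2 + v.1 k) = Q v)
    {i j : ι} (hij : i ≠ j) :
    Q (0, 1) = 2 • polar Q (Pi.single i 1, 0) (Pi.single j 1, 0) := by
  have hi : Equiv.swap j k i ≠ k := by
    simpa using (Equiv.swap j k).injective.ne hij
  rw [polar_single_single_eq_of_perm Q hperm i j k,
    ← polar_single_zero_one_eq_two_smul_of_simpleReflection Q (map_simpleReflection Q hσ) hi,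
    polar_single_zero_one_eq_map Q hperm hσ]

end

/-- Let `r ≥ 2` and let `Q` be a quadratic form on `ℤ^{r+1}`
(realized as `(Fin r → ℤ) × ℤ`, with `e_i = (Pi.single i 1, 0)` and `e_0 = (0,1)`),
with bilinear form `B_Q(x,y) = Q(x+y) - Q x - Q y`.  Assume `Q` is invariant under every
permutation of `e_1, …, e_r` fixing `e_0`, and under the automorphism `σ` determined by
`e_r ↦ e_0 - e_r`, `e_i ↦ e_i` (`i < r`), `e_0 ↦ e_0`.  Then `Q(e_1) = ⋯ = Q(e_r)`,
`B_Q(e_i, e_0) = Q(e_0)` for all `i`, and `Q(e_0) = 2·B_Q(e_i, e_j)` for all `i ≠ j`. -/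
theorem stmt11 (r : ℕ) (hr : 2 ≤ r)
    (Q : QuadraticForm ℤ ((Fin r → ℤ) × ℤ))
    (hperm : ∀ (σ : Equiv.Perm (Fin r)) (v : (Fin r → ℤ) × ℤ), Q (v.1 ∘ σ, v.2) = Q v)
    (hσ : ∀ v : (Fin r → ℤ) × ℤ,
        Q (Function.update v.1 ⟨r - 1, by omega⟩ (-(v.1 ⟨r - 1, by omega⟩)),
            v.2 + v.1 ⟨r - 1, by omega⟩) = Q v) :
    (∀ i j : Fin r, Q (Pi.single i 1, 0) = Q (Pi.single j 1, 0)) ∧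
    (∀ i : Fin r,
        Q ((Pi.single i 1, 0) + ((0, 1) : (Fin r → ℤ) × ℤ))
          - Q (Pi.single i 1, 0) - Q ((0, 1) : (Fin r → ℤ) × ℤ)
          = Q ((0, 1) : (Fin r → ℤ) × ℤ)) ∧
    (∀ i j : Fin r, i ≠ j →
        Q ((0, 1) : (Fin r → ℤ) × ℤ)
          = 2 * (Q ((Pi.single i 1, 0) + (Pi.single j 1, 0))
              - Q (Pi.single i 1, 0) - Q (Pi.single j 1, 0))) :=
  ⟨map_single_eq_of_perm Q hperm, polar_single_zero_one_eq_map Q hperm hσ,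
    fun _ _ hij => (map_zero_one_eq_two_smul_polar Q hperm hσ hij).trans (smul_eq_mul _ _)⟩
end

section
/- With the notation of the context, Y_0 = { y ∈ Y : y_1 + ⋯ + y_r + 2y_0 = 0 }, and Y_0 ∩ Y_{Q,n} equals the ℤ-span of the set { n(e_i − e_{i+1}) : 1 ≤ i ≤ r − 1 } ∪ { n_{(2)}(2e_r − e_0) }. In particular, since Q(e_i − e_{i+1}) = 1 and Q(2e_r − e_0) = 2 (so that n_{α_i} = n for i < r and n_{α_r} = n_{(2)}), one has Y_0 ∩ Y_{Q,n} = Y_{Q,n}^{sc}, i.e. every such cover of GSpin_{2r+1} is saturated. -/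
/-- The symmetric bilinear form on `Y = ℤ^{r+1}` (realized as `(Fin r → ℤ) × ℤ`, with
`e_i` the standard vectors of the first factor and `e_0 = (0,1)`) attached to an `n`-fold
Brylinski–Deligne cover of `GSpin_{2r+1}`: with `𝐪 = 2𝐩 - 1`, `B(e_i, e_i) = 2𝐩`,
`B(e_i, e_j) = 𝐪` for `i ≠ j`, `B(e_i, e_0) = 2𝐪`, `B(e_0, e_0) = 4𝐪`. -/
def BSpin (r : ℕ) (p : ℤ) (x y : (Fin r → ℤ) × ℤ) : ℤ :=
  2 * p * (∑ i, x.1 i * y.1 i)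
    + (2 * p - 1) * ((∑ i, x.1 i) * (∑ i, y.1 i) - ∑ i, x.1 i * y.1 i)
    + 2 * (2 * p - 1) * ((∑ i, x.1 i) * y.2 + x.2 * (∑ i, y.1 i))
    + 4 * (2 * p - 1) * (x.2 * y.2)

lemma BSpin_add_left (r : ℕ) (p : ℤ) (a b y : (Fin r → ℤ) × ℤ) :
    BSpin r p (a + b) y = BSpin r p a y + BSpin r p b y := by
  simp only [BSpin, Prod.fst_add, Prod.snd_add, Pi.add_apply, add_mul,
    Finset.sum_add_distrib]
  ring

lemma BSpin_neg_left (r : ℕ) (p : ℤ) (a y : (Fin r → ℤ) × ℤ) :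
    BSpin r p (-a) y = -BSpin r p a y := by
  simp only [BSpin, Prod.fst_neg, Prod.snd_neg, Pi.neg_apply, neg_mul,
    Finset.sum_neg_distrib]
  ring

/-- The lattice `Y_{Q,n} = {y ∈ Y : B(y, y') ∈ nℤ for all y' ∈ Y}`. -/
def YQnSpin (r n : ℕ) (p : ℤ) : AddSubgroup ((Fin r → ℤ) × ℤ) where
  carrier := {y | ∀ y', (n : ℤ) ∣ BSpin r p y y'}
  zero_mem' := by
    intro y'
    simp [BSpin]
  add_mem' := by
    intro a b ha hb y'
    rw [BSpin_add_left]
    exact dvd_add (ha y') (hb y')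
  neg_mem' := by
    intro a ha y'
    rw [BSpin_neg_left]
    exact dvd_neg.mpr (ha y')

/-- The simple coroot `α_i^∨ = e_i - e_{i+1}` of `GSpin_{2r+1}` for `1 ≤ i ≤ r - 1`. -/
def alphaSpin (r : ℕ) (i : Fin (r - 1)) : (Fin r → ℤ) × ℤ :=
  (Pi.single (⟨i.1, by have := i.2; omega⟩ : Fin r) 1
    - Pi.single (⟨i.1 + 1, by have := i.2; omega⟩ : Fin r) 1, 0)

/-- The simple coroot `α_r^∨ = 2e_r - e_0` of `GSpin_{2r+1}`. -/
def alphaRSpin (r : ℕ) (hr : 0 < r) : (Fin r → ℤ) × ℤ :=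
  (Pi.single (⟨r - 1, by omega⟩ : Fin r) 2, -1)

/-!
Writing `d(y) = y₁ + ⋯ + y_r + 2y₀`, one has `B(x, y) = x₁y₁ + ⋯ + x_ry_r + 𝐪·d(x)d(y)`, and the
simple coroots span exactly `Y₀ = ker d`. So on `Y₀` the form `B` is the standard dot product of
the first `r` coordinates, and `y ∈ Y₀` lies in `Y_{Q,n}` exactly when `n` divides every `y_i`;
this forces `n ∣ 2y₀`, i.e. `n_{(2)} ∣ y₀`. Splitting off `-y₀ · α_r^∨` leaves a vector `(w, 0)`
with `∑ w_j = 0` and `n ∣ w_j`, and `w = ∑_j w_j (e_j - e_r)` with each `e_j - e_r` a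
telescoping sum of the `α_i^∨`.
-/

theorem natCast_div_gcd_dvd_of_dvd_mul {n k : ℕ} (hk : 0 < k) {c : ℤ}
    (h : (n : ℤ) ∣ k * c) : ((n / n.gcd k : ℕ) : ℤ) ∣ c := by
  obtain ⟨g, n', k', hg, hcop, rfl, rfl⟩ := Nat.exists_coprime' (Nat.gcd_pos_of_pos_right n hk)
  rw [Nat.gcd_mul_right, hcop.gcd_eq_one, one_mul, Nat.mul_div_cancel _ hg]
  have h' : (n' : ℤ) ∣ k' * c := by
    refine (mul_dvd_mul_iff_right (c := (g : ℤ)) (by exact_mod_cast hg.ne')).mp ?_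
    simpa [mul_right_comm] using h
  exact (Nat.isCoprime_iff_coprime.mpr hcop).dvd_of_dvd_mul_left h'

theorem dvd_mul_div_gcd (n k : ℕ) : n ∣ k * (n / n.gcd k) := by
  rw [← Nat.mul_div_assoc _ (Nat.gcd_dvd_left n k), mul_comm,
    Nat.mul_div_assoc _ (Nat.gcd_dvd_right n k)]
  exact dvd_mul_right n _

namespace Spin

variable {r : ℕ}

def deg (r : ℕ) : ((Fin r → ℤ) × ℤ) →+ ℤ :=
  AddMonoidHom.mk' (fun y => ∑ i, y.1 i + 2 * y.2) fun a b => by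
    simp only [Prod.fst_add, Prod.snd_add, Pi.add_apply, Finset.sum_add_distrib]
    ring

theorem deg_apply (y : (Fin r → ℤ) × ℤ) : deg r y = ∑ i, y.1 i + 2 * y.2 := rfl

def last (hr : 0 < r) : Fin r := ⟨r - 1, by omega⟩

theorem BSpin_eq_dotProduct_add (p : ℤ) (x y : (Fin r → ℤ) × ℤ) :
    BSpin r p x y = x.1 ⬝ᵥ y.1 + (2 * p - 1) * (deg r x * deg r y) := by
  simp only [BSpin, dotProduct, deg_apply]
  ring

theorem BSpin_eq_dotProduct {p : ℤ} {y : (Fin r → ℤ) × ℤ} (hy : deg r y = 0)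
    (y' : (Fin r → ℤ) × ℤ) : BSpin r p y y' = y.1 ⬝ᵥ y'.1 := by
  rw [BSpin_eq_dotProduct_add, hy, zero_mul, mul_zero, add_zero]

theorem BSpin_smul_left (p c : ℤ) (x y : (Fin r → ℤ) × ℤ) :
    BSpin r p (c • x) y = c * BSpin r p x y := by
  simp only [BSpin, Prod.smul_fst, Prod.smul_snd, Pi.smul_apply, smul_eq_mul, mul_assoc,
    ← Finset.mul_sum]
  ring

theorem deg_alphaSpin (i : Fin (r - 1)) : deg r (alphaSpin r i) = 0 := by
  simp [deg_apply, alphaSpin, Finset.sum_sub_distrib]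

theorem deg_alphaRSpin (hr : 0 < r) : deg r (alphaRSpin r hr) = 0 := by
  simp [deg_apply, alphaRSpin]

theorem BSpin_alphaSpin_self (p : ℤ) (i : Fin (r - 1)) :
    BSpin r p (alphaSpin r i) (alphaSpin r i) = 2 := by
  rw [BSpin_eq_dotProduct (deg_alphaSpin i)]
  have hne : (⟨i.1, by omega⟩ : Fin r) ≠ ⟨i.1 + 1, by omega⟩ := by simp [Fin.ext_iff]
  simp [alphaSpin, dotProduct_sub, hne, hne.symm]

theorem BSpin_alphaRSpin_self (p : ℤ) (hr : 0 < r) :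
    BSpin r p (alphaRSpin r hr) (alphaRSpin r hr) = 4 := by
  rw [BSpin_eq_dotProduct (deg_alphaRSpin hr)]
  simp [alphaRSpin]

theorem smul_single_sub_single_last_mem (m : ℤ) (hr : 0 < r) (j : Fin r) :
    m • ((Pi.single j 1 - Pi.single (last hr) 1, 0) : (Fin r → ℤ) × ℤ) ∈
      AddSubgroup.closure (Set.range fun i : Fin (r - 1) => m • alphaSpin r i) := by
  obtain ⟨k, hk⟩ : ∃ k, j.1 + k = r - 1 := ⟨r - 1 - j.1, by omega⟩
  induction k generalizing j with
  | zero =>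
    have : j = last hr := Fin.ext (by simp [last]; omega)
    simp only [this, sub_self, Prod.mk_zero_zero, smul_zero]
    exact zero_mem _
  | succ k ih =>
    have hsplit : m • ((Pi.single j 1 - Pi.single (last hr) 1, 0) : (Fin r → ℤ) × ℤ) =
        m • alphaSpin r ⟨j.1, by omega⟩ +
          m • (Pi.single ⟨j.1 + 1, by omega⟩ 1 - Pi.single (last hr) 1, 0) := by
      rw [← smul_add]
      simp [alphaSpin]
    rw [hsplit]
    exact add_mem (AddSubgroup.subset_closure ⟨_, rfl⟩) (ih _ (by simp; omega))

theorem mk_mem_closure_smul_alphaSpin (m : ℤ) (hr : 0 < r) {w : Fin r → ℤ}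
    (hdvd : ∀ j, m ∣ w j) (hw : ∑ j, w j = 0) :
    ((w, 0) : (Fin r → ℤ) × ℤ) ∈
      AddSubgroup.closure (Set.range fun i : Fin (r - 1) => m • alphaSpin r i) := by
  choose u hu using hdvd
  have hexp : ((w, 0) : (Fin r → ℤ) × ℤ) =
      ∑ j, u j • m • ((Pi.single j 1 - Pi.single (last hr) 1, 0) : (Fin r → ℤ) × ℤ) := by
    ext k
    · simp only [Prod.fst_sum, Prod.smul_fst, Finset.sum_apply, Pi.smul_apply, Pi.sub_apply,
        smul_eq_mul, Pi.single_apply]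
      simp only [hu] at hw
      simp [mul_sub, Finset.sum_sub_distrib, hw, hu, mul_comm]
    · simp only [Prod.snd_sum, Prod.smul_snd, smul_zero, Finset.sum_const_zero]
  rw [hexp]
  exact sum_mem fun j _ => zsmul_mem (smul_single_sub_single_last_mem m hr j) _

theorem eq_smul_alphaRSpin_add (hr : 0 < r) (y : (Fin r → ℤ) × ℤ) :
    y = (-y.2) • alphaRSpin r hr + (y.1 + Pi.single (last hr) (2 * y.2), 0) := by
  ext j
  · simp only [alphaRSpin, Prod.fst_add, Prod.smul_fst, Pi.add_apply, Pi.smul_apply,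
      smul_eq_mul, Pi.single_apply, last]
    split_ifs <;> ring
  · simp [alphaRSpin]

theorem sum_add_single_last (hr : 0 < r) (y : (Fin r → ℤ) × ℤ) :
    ∑ j, (y.1 + Pi.single (last hr) (2 * y.2) : Fin r → ℤ) j = deg r y := by
  simp [Finset.sum_add_distrib, deg_apply]

theorem closure_simpleCoroots_eq_ker_deg (hr : 0 < r) :
    AddSubgroup.closure (insert (alphaRSpin r hr) (Set.range (alphaSpin r))) = (deg r).ker := by
  apply le_antisymm
  · rw [AddSubgroup.closure_le]
    rintro _ (rfl | ⟨i, rfl⟩)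
    exacts [deg_alphaRSpin hr, deg_alphaSpin i]
  · intro y hy
    rw [eq_smul_alphaRSpin_add hr y]
    refine add_mem (zsmul_mem (AddSubgroup.subset_closure (Set.mem_insert _ _)) _)
      (AddSubgroup.closure_mono (Set.subset_insert _ _) ?_)
    simpa using mk_mem_closure_smul_alphaSpin 1 hr (fun _ => one_dvd _)
      ((sum_add_single_last hr y).trans hy)

theorem mem_YQnSpin_iff_of_deg_eq_zero {n : ℕ} {p : ℤ} {y : (Fin r → ℤ) × ℤ}
    (hy : deg r y = 0) : y ∈ YQnSpin r n p ↔ ∀ j, (n : ℤ) ∣ y.1 j := by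
  refine ⟨fun h j => ?_, fun h y' => ?_⟩
  · simpa [BSpin_eq_dotProduct hy] using h (Pi.single j 1, 0)
  · rw [BSpin_eq_dotProduct hy]
    exact Finset.dvd_sum fun j _ => (h j).mul_right _

theorem closure_simpleCoroots_inf_YQnSpin (n : ℕ) (p : ℤ) (hr : 0 < r) :
    AddSubgroup.closure (insert (alphaRSpin r hr) (Set.range (alphaSpin r))) ⊓ YQnSpin r n p =
      AddSubgroup.closure (insert (((n / Nat.gcd n 2 : ℕ) : ℤ) • alphaRSpin r hr)
        (Set.range fun i : Fin (r - 1) => (n : ℤ) • alphaSpin r i)) := by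
  apply le_antisymm
  · rintro y ⟨hy₀, hyQ⟩
    have hdeg : deg r y = 0 := by rwa [closure_simpleCoroots_eq_ker_deg hr] at hy₀
    have hdvd := (mem_YQnSpin_iff_of_deg_eq_zero hdeg).mp hyQ
    have hdvd₂ : (n : ℤ) ∣ 2 * y.2 := by
      rw [show 2 * y.2 = -∑ j, y.1 j by rw [deg_apply] at hdeg; linarith]
      exact (Finset.dvd_sum fun j _ => hdvd j).neg_right
    obtain ⟨c, hc⟩ := natCast_div_gcd_dvd_of_dvd_mul two_pos (by exact_mod_cast hdvd₂)
    rw [eq_smul_alphaRSpin_add hr y]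
    refine add_mem ?_ ?_
    · rw [hc, neg_mul_eq_mul_neg, mul_comm, mul_smul]
      exact zsmul_mem (AddSubgroup.subset_closure (Set.mem_insert _ _)) _
    · refine AddSubgroup.closure_mono (Set.subset_insert _ _)
        (mk_mem_closure_smul_alphaSpin n hr (fun j => ?_) ((sum_add_single_last hr y).trans hdeg))
      rw [Pi.add_apply, Pi.single_apply]
      split_ifs
      exacts [dvd_add (hdvd j) hdvd₂, by simpa using hdvd j]
  · rw [AddSubgroup.closure_le]
    rintro _ (rfl | ⟨i, rfl⟩)
    · refine ⟨zsmul_mem (AddSubgroup.subset_closure (Set.mem_insert _ _)) _, fun y' => ?_⟩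
      rw [BSpin_smul_left, BSpin_eq_dotProduct (deg_alphaRSpin hr), alphaRSpin, single_dotProduct,
        ← mul_assoc, mul_comm _ (2 : ℤ)]
      exact (Int.natCast_dvd_natCast.mpr (dvd_mul_div_gcd n 2)).mul_right _
    · refine ⟨zsmul_mem (AddSubgroup.subset_closure
        (Set.mem_insert_of_mem _ (Set.mem_range_self i))) _, fun y' => ?_⟩
      rw [BSpin_smul_left]
      exact dvd_mul_right _ _

end Spin

theorem stmt12_general (r n : ℕ) (hr : 0 < r) (p : ℤ) :
    (∀ i : Fin (r - 1), BSpin r p (alphaSpin r i) (alphaSpin r i) = 2) ∧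
    BSpin r p (alphaRSpin r hr) (alphaRSpin r hr) = 4 ∧
    ((AddSubgroup.closure (insert (alphaRSpin r hr) (Set.range (alphaSpin r)))
        : AddSubgroup ((Fin r → ℤ) × ℤ)) : Set ((Fin r → ℤ) × ℤ))
      = {y | (∑ i, y.1 i) + 2 * y.2 = 0} ∧
    AddSubgroup.closure (insert (alphaRSpin r hr) (Set.range (alphaSpin r)))
        ⊓ YQnSpin r n p
      = AddSubgroup.closure
          (insert (((n / Nat.gcd n 2 : ℕ) : ℤ) • alphaRSpin r hr)
            (Set.range fun i : Fin (r - 1) => (n : ℤ) • alphaSpin r i)) :=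
  ⟨Spin.BSpin_alphaSpin_self p, Spin.BSpin_alphaRSpin_self p hr,
    congrArg SetLike.coe (Spin.closure_simpleCoroots_eq_ker_deg hr),
    Spin.closure_simpleCoroots_inf_YQnSpin n p hr⟩

/-- `Q(α_i^∨) = 1` and `Q(α_r^∨) = 2` (i.e. `B(α_i^∨,α_i^∨) = 2` and
`B(α_r^∨,α_r^∨) = 4`), the span `Y_0` of the simple coroots is
`{y ∈ Y : y_1 + ⋯ + y_r + 2y_0 = 0}`, and `Y_0 ∩ Y_{Q,n}` is the ℤ-span of
`{n·α_i^∨ : 1 ≤ i ≤ r-1} ∪ {n_{(2)}·α_r^∨}`; that is, `Y_0 ∩ Y_{Q,n} = Y_{Q,n}^{sc}`,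
so every such cover of `GSpin_{2r+1}` is saturated. -/
theorem stmt12 (r n : ℕ) (hr : 0 < r) (hn : 0 < n) (p : ℤ) :
    (∀ i : Fin (r - 1), BSpin r p (alphaSpin r i) (alphaSpin r i) = 2) ∧
    BSpin r p (alphaRSpin r hr) (alphaRSpin r hr) = 4 ∧
    ((AddSubgroup.closure (insert (alphaRSpin r hr) (Set.range (alphaSpin r)))
        : AddSubgroup ((Fin r → ℤ) × ℤ)) : Set ((Fin r → ℤ) × ℤ))
      = {y | (∑ i, y.1 i) + 2 * y.2 = 0} ∧
    AddSubgroup.closure (insert (alphaRSpin r hr) (Set.range (alphaSpin r)))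
        ⊓ YQnSpin r n p
      = AddSubgroup.closure
          (insert (((n / Nat.gcd n 2 : ℕ) : ℤ) • alphaRSpin r hr)
            (Set.range fun i : Fin (r - 1) => (n : ℤ) • alphaSpin r i)) :=
  stmt12_general r n hr p
end

section
/- With the notation of the context, assume 2𝐩 − 𝐪 = −1 (the Kazhdan–Patterson case), and set e_c := e_1 + ⋯ + e_r, b := (2𝐩 + 1)r − 1, and Y_c := ℤe_c. Then B(e_c, e_i) = b for every i and B(e_c, e_c) = rb; moreover Y_c ∩ Y_{Q,n} = (n/gcd(n, b))·ℤe_c, the lattice Y_{c,Q,n} := { y ∈ Y_c : B(y, y') ∈ nℤ for all y' ∈ Y_c } equals (n/gcd(n, rb))·ℤe_c, and n/gcd(n, b) = gcd(n, r) · (n/gcd(n, rb)). In particular, Y_c ∩ Y_{Q,n} = Y_{c,Q,n} if and only if gcd(n, r) = 1. -/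
/-- The symmetric bilinear form on `Y = ℤ^r` attached to an `n`-fold Brylinski–Deligne
cover of `GL_r`: `B(e_i, e_i) = 2𝐩` and `B(e_i, e_j) = 𝐪` for `i ≠ j`. -/
def BGL (r : ℕ) (p q : ℤ) (x y : Fin r → ℤ) : ℤ :=
  2 * p * (∑ i, x i * y i) + q * ((∑ i, x i) * (∑ i, y i) - ∑ i, x i * y i)

lemma BGL_add_left (r : ℕ) (p q : ℤ) (a b y : Fin r → ℤ) :
    BGL r p q (a + b) y = BGL r p q a y + BGL r p q b y := by
  simp only [BGL, Pi.add_apply, add_mul, Finset.sum_add_distrib]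
  ring

lemma BGL_neg_left (r : ℕ) (p q : ℤ) (a y : Fin r → ℤ) :
    BGL r p q (-a) y = -BGL r p q a y := by
  simp only [BGL, Pi.neg_apply, neg_mul, Finset.sum_neg_distrib]
  ring

/-- The lattice `Y_{Q,n} = {y ∈ Y : B(y, y') ∈ nℤ for all y' ∈ Y}`. -/
def YQnGL (r n : ℕ) (p q : ℤ) : AddSubgroup (Fin r → ℤ) where
  carrier := {y | ∀ y', (n : ℤ) ∣ BGL r p q y y'}
  zero_mem' := by
    intro y'
    simp [BGL]
  add_mem' := by
    intro a b ha hb y'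
    rw [BGL_add_left]
    exact dvd_add (ha y') (hb y')
  neg_mem' := by
    intro a ha y'
    rw [BGL_neg_left]
    exact dvd_neg.mpr (ha y')

/-- `n_α = n / gcd(n, Q(α^∨))` with `Q(α^∨) = 2𝐩 - 𝐪`. -/
def nAlpha (n : ℕ) (p q : ℤ) : ℕ := n / Int.gcd (n : ℤ) (2 * p - q)

/-- The coroot lattice `Y_0 = {y ∈ ℤ^r : y_1 + ⋯ + y_r = 0}` of `GL_r`. -/
def Y0GL (r : ℕ) : AddSubgroup (Fin r → ℤ) where
  carrier := {y | ∑ i, y i = 0}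
  zero_mem' := by simp
  add_mem' := by
    intro a b ha hb
    have ha' : ∑ i, a i = 0 := ha
    have hb' : ∑ i, b i = 0 := hb
    show ∑ i, (a + b) i = 0
    simp only [Pi.add_apply, Finset.sum_add_distrib, ha', hb', add_zero]
  neg_mem' := by
    intro a ha
    have ha' : ∑ i, a i = 0 := ha
    show ∑ i, (-a) i = 0
    simp only [Pi.neg_apply, Finset.sum_neg_distrib, ha', neg_zero]

/-- The lattice `Y_{0,Q,n} = {y ∈ Y_0 : B(y, y') ∈ nℤ for all y' ∈ Y_0}`. -/
def Y0QnGL (r n : ℕ) (p q : ℤ) : AddSubgroup (Fin r → ℤ) where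
  carrier := {y | (∑ i, y i = 0) ∧
      ∀ y' : Fin r → ℤ, (∑ i, y' i = 0) → (n : ℤ) ∣ BGL r p q y y'}
  zero_mem' := ⟨by simp, fun y' _ => by simp [BGL]⟩
  add_mem' := by
    rintro a b ⟨ha0, ha⟩ ⟨hb0, hb⟩
    refine ⟨?_, fun y' hy' => ?_⟩
    · simp only [Pi.add_apply, Finset.sum_add_distrib, ha0, hb0, add_zero]
    · rw [BGL_add_left]
      exact dvd_add (ha y' hy') (hb y' hy')
  neg_mem' := by
    rintro a ⟨ha0, ha⟩
    refine ⟨?_, fun y' hy' => ?_⟩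
    · simp only [Pi.neg_apply, Finset.sum_neg_distrib, ha0, neg_zero]
    · rw [BGL_neg_left]
      exact dvd_neg.mpr (ha y' hy')

/-- The central cocharacter `e_c = e_1 + ⋯ + e_r` of `GL_r`. -/
def ecGL (r : ℕ) : Fin r → ℤ := fun _ => 1

/-- The lattice `Y_{c,Q,n} = {y ∈ Y_c : B(y, y') ∈ nℤ for all y' ∈ Y_c}`, where
`Y_c = ℤe_c`. -/
def YcQnGL (r n : ℕ) (p q : ℤ) : AddSubgroup (Fin r → ℤ) where
  carrier := {y | y ∈ AddSubgroup.zmultiples (ecGL r) ∧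
      ∀ y' ∈ AddSubgroup.zmultiples (ecGL r), (n : ℤ) ∣ BGL r p q y y'}
  zero_mem' := ⟨zero_mem _, fun y' _ => by simp [BGL]⟩
  add_mem' := by
    rintro a b ⟨haz, ha⟩ ⟨hbz, hb⟩
    refine ⟨add_mem haz hbz, fun y' hy' => ?_⟩
    rw [BGL_add_left]
    exact dvd_add (ha y' hy') (hb y' hy')
  neg_mem' := by
    rintro a ⟨haz, ha⟩
    refine ⟨neg_mem haz, fun y' hy' => ?_⟩
    rw [BGL_neg_left]
    exact dvd_neg.mpr (ha y' hy')

/-! In the Kazhdan–Patterson case `𝐪 = 2𝐩 + 1` the form collapses on multiples of `e_c` to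
`B(m e_c, y) = m b Σ yᵢ` with `b = (2𝐩 + 1)r - 1`. Hence `m e_c ∈ Y_{Q,n}` iff `n ∣ m b`, and
`m e_c ∈ Y_{c,Q,n}` iff `n ∣ m r b`, i.e. iff `n / gcd(n, b) ∣ m`, resp. `n / gcd(n, r b) ∣ m`.
Since `b ≡ -1 (mod r)`, `r` and `b` are coprime, so `gcd(n, r b) = gcd(n, r) gcd(n, b)`. -/

theorem Int.natCast_dvd_mul_iff_div_gcd_dvd {n : ℕ} (hn : n ≠ 0) (c m : ℤ) :
    (n : ℤ) ∣ m * c ↔ ((n / Int.gcd n c : ℕ) : ℤ) ∣ m := by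
  have hg : (Int.gcd n c : ℤ) ∣ n := Int.gcd_dvd_left ..
  have hg0 : (Int.gcd n c : ℤ) ≠ 0 := by
    exact_mod_cast (Int.gcd_pos_of_ne_zero_left c (by exact_mod_cast hn)).ne'
  rw [← Int.dvd_mul_gcd_iff_dvd_mul, Int.natCast_div, Int.ediv_dvd_iff_dvd_mul hg hg0, mul_comm]

theorem Int.div_gcd_eq_gcd_mul_div_gcd_mul {r : ℕ} {b : ℤ} (hrb : IsCoprime (r : ℤ) b)
    (n : ℕ) :
    n / Int.gcd n b = Nat.gcd n r * (n / Int.gcd n (r * b)) := by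
  have hrb' : r.Coprime b.natAbs := by
    simpa [Int.gcd_eq_natAbs] using Int.isCoprime_iff_gcd_eq_one.mp hrb
  simp only [Int.gcd_eq_natAbs, Int.natAbs_mul, Int.natAbs_natCast, hrb'.gcd_mul n]
  have hdvd : Nat.gcd n r ∣ n / Nat.gcd n b.natAbs := by
    rw [Nat.dvd_div_iff_mul_dvd (Nat.gcd_dvd_left ..), mul_comm, ← hrb'.gcd_mul n]
    exact Nat.gcd_dvd_left ..
  rw [Nat.mul_comm (Nat.gcd n r) (Nat.gcd n _), ← Nat.div_div_eq_div_mul,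
    Nat.mul_div_cancel' hdvd]

namespace AddSubgroup

variable {G : Type*} [AddCommGroup G] {e : G}

theorem eq_zmultiples_zsmul_of_zsmul_mem_iff_s15 {H : AddSubgroup G} {a : ℤ} (hH : H ≤ zmultiples e)
    (h : ∀ m : ℤ, m • e ∈ H ↔ a ∣ m) : H = zmultiples (a • e) := by
  ext x
  constructor
  · intro hx
    obtain ⟨m, rfl⟩ := mem_zmultiples_iff.mp (hH hx)
    obtain ⟨k, rfl⟩ := (h m).mp hx
    exact ⟨k, by simp only [mul_comm a, mul_smul]⟩
  · intro hx
    obtain ⟨k, rfl⟩ := mem_zmultiples_iff.mp hx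
    rw [smul_smul]
    exact (h _).mpr (dvd_mul_left a k)

theorem zsmul_mem_zmultiples_zsmul_iff (he : Function.Injective fun m : ℤ => m • e)
    {a m : ℤ} :
    m • e ∈ zmultiples (a • e) ↔ a ∣ m := by
  simp only [mem_zmultiples_iff, smul_smul]
  exact ⟨fun ⟨k, hk⟩ => ⟨k, mul_comm a k ▸ (he hk).symm⟩,
    fun ⟨k, hk⟩ => ⟨k, by rw [hk, mul_comm]⟩⟩

theorem zmultiples_natCast_zsmul_inj (he : Function.Injective fun m : ℤ => m • e) {a b : ℕ} :
    zmultiples ((a : ℤ) • e) = zmultiples ((b : ℤ) • e) ↔ a = b := by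
  refine ⟨fun h => Nat.dvd_antisymm ?_ ?_, fun h => h ▸ rfl⟩
  · exact Int.natCast_dvd_natCast.mp
      ((zsmul_mem_zmultiples_zsmul_iff he).mp (h ▸ mem_zmultiples _))
  · exact Int.natCast_dvd_natCast.mp
      ((zsmul_mem_zmultiples_zsmul_iff he).mp (h.symm ▸ mem_zmultiples _))

end AddSubgroup

section KazhdanPatterson

variable {r n : ℕ} {p q : ℤ}

theorem zsmul_ecGL_injective (hr : 0 < r) : Function.Injective fun m : ℤ => m • ecGL r :=
  fun a b h => by simpa [ecGL] using congrFun h ⟨0, hr⟩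

theorem BGL_zsmul_ecGL_left (hpq : 2 * p - q = -1) (m : ℤ) (y : Fin r → ℤ) :
    BGL r p q (m • ecGL r) y = m * (∑ i, y i) * ((2 * p + 1) * r - 1) := by
  obtain rfl : q = 2 * p + 1 := by omega
  simp only [BGL, ecGL, Pi.smul_apply, smul_eq_mul, mul_one, ← Finset.mul_sum,
    Finset.sum_const, Finset.card_univ, Fintype.card_fin, nsmul_eq_mul]
  ring

theorem zsmul_ecGL_mem_YQnGL_iff (hr : 0 < r) (hpq : 2 * p - q = -1) (m : ℤ) :
    m • ecGL r ∈ YQnGL r n p q ↔ (n : ℤ) ∣ m * ((2 * p + 1) * r - 1) := by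
  refine ⟨fun h => ?_, fun h y => ?_⟩
  · have := h (Pi.single ⟨0, hr⟩ 1)
    rwa [BGL_zsmul_ecGL_left hpq, Fintype.sum_pi_single', mul_one] at this
  · rw [BGL_zsmul_ecGL_left hpq, mul_right_comm]
    exact h.mul_right _

theorem zsmul_ecGL_mem_YcQnGL_iff (hpq : 2 * p - q = -1) (m : ℤ) :
    m • ecGL r ∈ YcQnGL r n p q ↔ (n : ℤ) ∣ m * (r * ((2 * p + 1) * r - 1)) := by
  have hsum (k : ℤ) : ∑ i, (k • ecGL r) i = r * k := by simp [ecGL, mul_comm]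
  refine ⟨fun ⟨_, h⟩ => ?_, fun h => ⟨⟨m, rfl⟩, ?_⟩⟩
  · have := h (1 • ecGL r) ⟨1, rfl⟩
    rwa [BGL_zsmul_ecGL_left hpq, hsum, mul_one, mul_assoc] at this
  · rintro _ ⟨k, rfl⟩
    rw [BGL_zsmul_ecGL_left hpq, hsum]
    exact h.trans ⟨k, by ring⟩

theorem zmultiples_ecGL_inf_YQnGL (hr : 0 < r) (hn : n ≠ 0) (hpq : 2 * p - q = -1) :
    AddSubgroup.zmultiples (ecGL r) ⊓ YQnGL r n p q = AddSubgroup.zmultiples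
      (((n / Int.gcd n ((2 * p + 1) * r - 1) : ℕ) : ℤ) • ecGL r) := by
  refine AddSubgroup.eq_zmultiples_zsmul_of_zsmul_mem_iff_s15 inf_le_left fun m => ?_
  rw [AddSubgroup.mem_inf, and_iff_right (zsmul_mem (AddSubgroup.mem_zmultiples _) m),
    zsmul_ecGL_mem_YQnGL_iff hr hpq, Int.natCast_dvd_mul_iff_div_gcd_dvd hn]

theorem YcQnGL_eq_zmultiples (hn : n ≠ 0) (hpq : 2 * p - q = -1) :
    YcQnGL r n p q = AddSubgroup.zmultiples
      (((n / Int.gcd n (r * ((2 * p + 1) * r - 1)) : ℕ) : ℤ) • ecGL r) := by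
  refine AddSubgroup.eq_zmultiples_zsmul_of_zsmul_mem_iff_s15 (fun _ hy => hy.1) fun m => ?_
  rw [zsmul_ecGL_mem_YcQnGL_iff hpq, Int.natCast_dvd_mul_iff_div_gcd_dvd hn]

end KazhdanPatterson

/-- In the Kazhdan–Patterson case `2𝐩 - 𝐪 = -1`, with
`b = (2𝐩+1)r - 1`: `B(e_c, e_i) = b` for all `i` and `B(e_c, e_c) = rb`; moreover
`Y_c ∩ Y_{Q,n} = (n/gcd(n,b))·ℤe_c`, `Y_{c,Q,n} = (n/gcd(n,rb))·ℤe_c`, and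
`n/gcd(n,b) = gcd(n,r)·(n/gcd(n,rb))`.  In particular `Y_c ∩ Y_{Q,n} = Y_{c,Q,n}` if and
only if `gcd(n,r) = 1`. -/
theorem stmt15 (r n : ℕ) (hr : 1 ≤ r) (hn : 0 < n) (p q : ℤ) (hpq : 2 * p - q = -1) :
    (∀ i : Fin r, BGL r p q (ecGL r) (Pi.single i 1) = (2 * p + 1) * (r : ℤ) - 1) ∧
    BGL r p q (ecGL r) (ecGL r) = (r : ℤ) * ((2 * p + 1) * (r : ℤ) - 1) ∧
    AddSubgroup.zmultiples (ecGL r) ⊓ YQnGL r n p q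
      = AddSubgroup.zmultiples
          (((n / Int.gcd (n : ℤ) ((2 * p + 1) * (r : ℤ) - 1) : ℕ) : ℤ) • ecGL r) ∧
    YcQnGL r n p q
      = AddSubgroup.zmultiples
          (((n / Int.gcd (n : ℤ) ((r : ℤ) * ((2 * p + 1) * (r : ℤ) - 1)) : ℕ) : ℤ) • ecGL r) ∧
    n / Int.gcd (n : ℤ) ((2 * p + 1) * (r : ℤ) - 1)
      = Nat.gcd n r * (n / Int.gcd (n : ℤ) ((r : ℤ) * ((2 * p + 1) * (r : ℤ) - 1))) ∧
    (AddSubgroup.zmultiples (ecGL r) ⊓ YQnGL r n p q = YcQnGL r n p q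
      ↔ Nat.gcd n r = 1) := by
  set b : ℤ := (2 * p + 1) * r - 1
  have hrb : IsCoprime (r : ℤ) b := ⟨2 * p + 1, -1, by ring⟩
  have hYQ := zmultiples_ecGL_inf_YQnGL hr hn.ne' hpq
  have hYcQ := YcQnGL_eq_zmultiples (r := r) hn.ne' hpq
  have hdiv := Int.div_gcd_eq_gcd_mul_div_gcd_mul hrb n
  have hpos : 0 < n / Int.gcd n (r * b) := by
    simpa using Int.natAbs_div_gcd_pos_of_ne_zero_left (r * b) (Int.natCast_ne_zero.mpr hn.ne')
  refine ⟨fun i => ?_, ?_, hYQ, hYcQ, hdiv, ?_⟩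
  · simpa using BGL_zsmul_ecGL_left hpq 1 (Pi.single i 1)
  · simpa [ecGL] using BGL_zsmul_ecGL_left hpq 1 (ecGL r)
  · rw [hYQ, hYcQ, AddSubgroup.zmultiples_natCast_zsmul_inj (zsmul_ecGL_injective hr), hdiv,
      Nat.mul_eq_right hpos.ne']
end
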